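/- arXiv:math/9812154 — 6 statements merged into one kernel-verified Lean document; each statement's English description precedes it below -/
import Mathlib

section
/- In the polynomial ring ℚ[a0,...,a7], the identity f1²·f4 = f3² + 4·f21·f22·f23 holds, where f1 = a0+a1+...+a7; f4 = (a0²a7² + a3²a4² + a5²a2² + a6²a1²) + 4(a0a3a5a6 + a7a4a2a1) − 2(a0a7a3a4 + a0a7a5a2 + a0a7a6a1 + a3a4a5a2 + a3a4a6a1 + a5a2a6a1); f3 = ((a0+a3+a5+a6)−(a7+a4+a2+a1))·(a0a7+a3a4+a5a2+a6a1) − 2(a0a7(a0−a7)+a3a4(a3−a4)+a5a2(a5−a2)+a6a1(a6−a1)) + 2((a3a5a6+a0a5a6+a0a3a6+a0a3a5)−(a4a2a1+a7a2a1+a7a4a1+a7a4a2)); f21 = (a0+a4)(a7+a3)−(a1+a5)(a6+a2); f22 = (a0+a2)(a7+a5)−(a4+a6)(a3+a1); f23 = (a0+a1)(a7+a6)−(a2+a3)(a5+a4). -/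
open MvPolynomial in
noncomputable def a0 : MvPolynomial (Fin 8) ℚ := X 0
open MvPolynomial in
noncomputable def a1 : MvPolynomial (Fin 8) ℚ := X 1
open MvPolynomial in
noncomputable def a2 : MvPolynomial (Fin 8) ℚ := X 2
open MvPolynomial in
noncomputable def a3 : MvPolynomial (Fin 8) ℚ := X 3
open MvPolynomial in
noncomputable def a4 : MvPolynomial (Fin 8) ℚ := X 4
open MvPolynomial in
noncomputable def a5 : MvPolynomial (Fin 8) ℚ := X 5
open MvPolynomial in
noncomputable def a6 : MvPolynomial (Fin 8) ℚ := X 6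
open MvPolynomial in
noncomputable def a7 : MvPolynomial (Fin 8) ℚ := X 7

/-!
Arrange the eight counts as a `2 × 2 × 2` tensor `t` with `a_{4i+2j+k} = t i j k`. Then `f₄` is
Cayley's hyperdeterminant of `t`, and `f₂₁, f₂₂, f₂₃` are the determinants of the three `2 × 2`
marginal tables obtained by summing out one index. In these terms the identity holds for a tensor
over any commutative ring, and the theorem is its instance at the generic tensor.
-/

namespace BinaryTensor

variable {R : Type*} [CommRing R] (t : Fin 2 → Fin 2 → Fin 2 → R)

def total : R := ∑ i, ∑ j, ∑ k, t i j k

def cayleyHyperdet : R :=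
  t 0 0 0 ^ 2 * t 1 1 1 ^ 2 + t 0 1 1 ^ 2 * t 1 0 0 ^ 2 + t 1 0 1 ^ 2 * t 0 1 0 ^ 2
    + t 1 1 0 ^ 2 * t 0 0 1 ^ 2
    + 4 * (t 0 0 0 * t 0 1 1 * t 1 0 1 * t 1 1 0 + t 1 1 1 * t 1 0 0 * t 0 1 0 * t 0 0 1)
    - 2 * (t 0 0 0 * t 1 1 1 * t 0 1 1 * t 1 0 0 + t 0 0 0 * t 1 1 1 * t 1 0 1 * t 0 1 0
      + t 0 0 0 * t 1 1 1 * t 1 1 0 * t 0 0 1 + t 0 1 1 * t 1 0 0 * t 1 0 1 * t 0 1 0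
      + t 0 1 1 * t 1 0 0 * t 1 1 0 * t 0 0 1 + t 1 0 1 * t 0 1 0 * t 1 1 0 * t 0 0 1)

def marginalDet₁ : R := (Matrix.of fun j k => ∑ i, t i j k).det

def marginalDet₂ : R := (Matrix.of fun i k => ∑ j, t i j k).det

def marginalDet₃ : R := (Matrix.of fun i j => ∑ k, t i j k).det

/-- The paper's `f₃`. With `e` (resp. `o`) the entries of even (resp. odd) index sum, paired with
their antipodes `t (1-i) (1-j) (1-k)`, it reads
`(∑ e - ∑ o) · ∑ e·ē - 2 ∑ e·ē·(e - ē) + 2 (σ₃(e) - σ₃(o))`. -/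
def cubic : R :=
  ((t 0 0 0 + t 0 1 1 + t 1 0 1 + t 1 1 0) - (t 1 1 1 + t 1 0 0 + t 0 1 0 + t 0 0 1))
      * (t 0 0 0 * t 1 1 1 + t 0 1 1 * t 1 0 0 + t 1 0 1 * t 0 1 0 + t 1 1 0 * t 0 0 1)
    - 2 * (t 0 0 0 * t 1 1 1 * (t 0 0 0 - t 1 1 1) + t 0 1 1 * t 1 0 0 * (t 0 1 1 - t 1 0 0)
      + t 1 0 1 * t 0 1 0 * (t 1 0 1 - t 0 1 0) + t 1 1 0 * t 0 0 1 * (t 1 1 0 - t 0 0 1))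
    + 2 * ((t 0 1 1 * t 1 0 1 * t 1 1 0 + t 0 0 0 * t 1 0 1 * t 1 1 0 + t 0 0 0 * t 0 1 1 * t 1 1 0
        + t 0 0 0 * t 0 1 1 * t 1 0 1)
      - (t 1 0 0 * t 0 1 0 * t 0 0 1 + t 1 1 1 * t 0 1 0 * t 0 0 1 + t 1 1 1 * t 1 0 0 * t 0 0 1
        + t 1 1 1 * t 1 0 0 * t 0 1 0))

theorem total_sq_mul_cayleyHyperdet :
    total t ^ 2 * cayleyHyperdet t
      = cubic t ^ 2 + 4 * marginalDet₁ t * marginalDet₂ t * marginalDet₃ t := by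
  simp only [total, cayleyHyperdet, cubic, marginalDet₁, marginalDet₂, marginalDet₃,
    Matrix.det_fin_two, Matrix.of_apply, Fin.sum_univ_two]
  ring

end BinaryTensor

theorem key_identity :
    (a0+a1+a2+a3+a4+a5+a6+a7)^2 * ((a0^2*a7^2 + a3^2*a4^2 + a5^2*a2^2 + a6^2*a1^2) + 4*(a0*a3*a5*a6 + a7*a4*a2*a1) - 2*(a0*a7*a3*a4 + a0*a7*a5*a2 + a0*a7*a6*a1 + a3*a4*a5*a2 + a3*a4*a6*a1 + a5*a2*a6*a1)) = (((a0+a3+a5+a6) - (a7+a4+a2+a1))*(a0*a7+a3*a4+a5*a2+a6*a1) - 2*(a0*a7*(a0-a7)+a3*a4*(a3-a4)+a5*a2*(a5-a2)+a6*a1*(a6-a1)) + 2*((a3*a5*a6+a0*a5*a6+a0*a3*a6+a0*a3*a5) - (a4*a2*a1+a7*a2*a1+a7*a4*a1+a7*a4*a2)))^2 + 4 * ((a0+a4)*(a7+a3) - (a1+a5)*(a6+a2)) * ((a0+a2)*(a7+a5) - (a4+a6)*(a3+a1)) * ((a0+a1)*(a7+a6) - (a2+a3)*(a5+a4)) :=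 by
  have h := BinaryTensor.total_sq_mul_cayleyHyperdet
    ![![![a0, a1], ![a2, a3]], ![![a4, a5], ![a6, a7]]]
  simp only [BinaryTensor.total, BinaryTensor.cayleyHyperdet, BinaryTensor.cubic,
    BinaryTensor.marginalDet₁, BinaryTensor.marginalDet₂, BinaryTensor.marginalDet₃,
    Matrix.det_fin_two, Matrix.of_apply, Fin.sum_univ_two, Matrix.cons_val_zero,
    Matrix.cons_val_one] at h
  linear_combination h
end

section
/- For each i ∈ {1,2,3}, the discriminant of the quadratic polynomial (det A_Σ(i))·x² − (det A_Σ(i) + det A_+(i) − det A_−(i))·x + det A_+(i) in x equals f4, i.e., (f2i + g2i)² − 4·f2i·(det A_+(i)) = f4 as polynomials in a0,...,a7, where f2i = det A_Σ(i) and g2i = det A_+(i) − det A_−(i). -/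
/-!
Write `P = det A₊`, `M = det A₋` and `det (A₊ + A₋) = P + M + m`, where `m` is the mixed
determinant of the two layers. Then `f₂ + g₂ = 2P + m`, and the discriminant of the quadratic
collapses to `m² - 4PM`, the discriminant of the binary form `det (x A₊ + y A₋)`. That this
discriminant is the same quartic for the three directions of slicing is Cayley's description of
the 2×2×2 hyperdeterminant.
-/

open Matrix

namespace Hyperdet

variable {R : Type*} [CommRing R]

/-- The coefficient of `x * y` in `det (x • X + y • Y)`. -/
def mixedDet (X Y : Matrix (Fin 2) (Fin 2) R) : R :=
  X 0 0 * Y 1 1 + Y 0 0 * X 1 1 - X 0 1 * Y 1 0 - Y 0 1 * X 1 0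

theorem det_add_fin_two (X Y : Matrix (Fin 2) (Fin 2) R) :
    (X + Y).det = X.det + Y.det + mixedDet X Y := by
  simp only [det_fin_two, mixedDet, Matrix.add_apply]
  ring

theorem discrim_det_add (X Y : Matrix (Fin 2) (Fin 2) R) :
    discrim (X + Y).det (-((X + Y).det + (X.det - Y.det))) X.det =
      discrim X.det (mixedDet X Y) Y.det := by
  rw [det_add_fin_two]
  unfold discrim
  ring

def layer (T : Fin 2 → Fin 2 → Fin 2 → R) : Fin 3 → Fin 2 → Matrix (Fin 2) (Fin 2) R
  | 0, s => of fun j k => T s j k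
  | 1, s => of fun i k => T i s k
  | 2, s => of fun i j => T i j s

def hyperdet (T : Fin 2 → Fin 2 → Fin 2 → R) : R :=
  (T 0 0 0 ^ 2 * T 1 1 1 ^ 2 + T 0 1 1 ^ 2 * T 1 0 0 ^ 2 + T 1 0 1 ^ 2 * T 0 1 0 ^ 2
      + T 1 1 0 ^ 2 * T 0 0 1 ^ 2)
    + 4 * (T 0 0 0 * T 0 1 1 * T 1 0 1 * T 1 1 0 + T 1 1 1 * T 1 0 0 * T 0 1 0 * T 0 0 1)
    - 2 * (T 0 0 0 * T 1 1 1 * T 0 1 1 * T 1 0 0 + T 0 0 0 * T 1 1 1 * T 1 0 1 * T 0 1 0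
      + T 0 0 0 * T 1 1 1 * T 1 1 0 * T 0 0 1 + T 0 1 1 * T 1 0 0 * T 1 0 1 * T 0 1 0
      + T 0 1 1 * T 1 0 0 * T 1 1 0 * T 0 0 1 + T 1 0 1 * T 0 1 0 * T 1 1 0 * T 0 0 1)

theorem discrim_layer_eq_hyperdet (T : Fin 2 → Fin 2 → Fin 2 → R) (d : Fin 3) :
    discrim (layer T d 1).det (mixedDet (layer T d 1) (layer T d 0)) (layer T d 0).det =
      hyperdet T := by
  fin_cases d <;>
  · simp only [layer, mixedDet, hyperdet, discrim, det_fin_two, of_apply]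
    ring

end Hyperdet

open Hyperdet in
theorem discriminant_is_hyperdeterminant (a0 a1 a2 a3 a4 a5 a6 a7 : ℚ) :
    ((((a0+a4)*(a7+a3) - (a1+a5)*(a6+a2)) + (-(a0*a3) + a1*a2 + a4*a7 - a5*a6))^2 - 4 * ((a0+a4)*(a7+a3) - (a1+a5)*(a6+a2)) * (a4*a7 - a5*a6) = ((a0^2*a7^2 + a3^2*a4^2 + a5^2*a2^2 + a6^2*a1^2) + 4*(a0*a3*a5*a6 + a7*a4*a2*a1) - 2*(a0*a7*a3*a4 + a0*a7*a5*a2 + a0*a7*a6*a1 + a3*a4*a5*a2 + a3*a4*a6*a1 + a5*a2*a6*a1))) ∧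
    ((((a0+a2)*(a7+a5) - (a4+a6)*(a3+a1)) + (-(a0*a5) + a1*a4 + a2*a7 - a3*a6))^2 - 4 * ((a0+a2)*(a7+a5) - (a4+a6)*(a3+a1)) * (a2*a7 - a3*a6) = ((a0^2*a7^2 + a3^2*a4^2 + a5^2*a2^2 + a6^2*a1^2) + 4*(a0*a3*a5*a6 + a7*a4*a2*a1) - 2*(a0*a7*a3*a4 + a0*a7*a5*a2 + a0*a7*a6*a1 + a3*a4*a5*a2 + a3*a4*a6*a1 + a5*a2*a6*a1))) ∧
    ((((a0+a1)*(a7+a6) - (a2+a3)*(a5+a4)) + (-(a0*a6) + a1*a7 + a2*a4 - a3*a5))^2 - 4 * ((a0+a1)*(a7+a6) - (a2+a3)*(a5+a4)) * (a1*a7 - a3*a5) = ((a0^2*a7^2 + a3^2*a4^2 + a5^2*a2^2 + a6^2*a1^2) + 4*(a0*a3*a5*a6 + a7*a4*a2*a1) - 2*(a0*a7*a3*a4 + a0*a7*a5*a2 + a0*a7*a6*a1 + a3*a4*a5*a2 + a3*a4*a6*a1 + a5*a2*a6*a1))) := by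
  -- `a_k` is the entry whose indices are the binary digits of `k`; the sign `+` is index `1`.
  let A : Fin 2 → Fin 2 → Fin 2 → ℚ := ![![![a0, a1], ![a2, a3]], ![![a4, a5], ![a6, a7]]]
  have key (d : Fin 3) :=
    (discrim_det_add (layer A d 1) (layer A d 0)).trans (discrim_layer_eq_hyperdet A d)
  obtain ⟨h₁, h₂, h₃⟩ : _ ∧ _ ∧ _ := ⟨key 0, key 1, key 2⟩
  simp only [layer, hyperdet, discrim, det_fin_two, of_apply, Matrix.add_apply, A, cons_val',
    cons_val_zero, cons_val_one, cons_val_fin_one] at h₁ h₂ h₃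
  exact ⟨by linear_combination h₁, by linear_combination h₂, by linear_combination h₃⟩
end

section
/- Suppose real numbers v, e1, e2, e3, q1, q2, q3, n satisfy the eight MMR equations a_k = n·p_k(v, e, q). Then for each i ∈ {1,2,3}, both x = e_i and x = q_i satisfy the quadratic equation (det A_Σ(i))·x² − (det A_Σ(i) + det A_+(i) − det A_−(i))·x + det A_+(i) = 0, where the matrices are built from the a_k. -/
/-!
Fix a direction `i` and let `Q`, `E` be the rank-one outer products of the vectors `(1 - q_j, q_j)`,
resp. `(1 - e_j, e_j)`, over the two other directions. The layers are then
`A₊ = n (v q_i Q + (1 - v) e_i E)` and `A₋ = n (v (1 - q_i) Q + (1 - v) (1 - e_i) E)`, and the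
quadratic in `x` is `det ((1 - x) A₊ - x A₋)`. At `x = q_i` (resp. `x = e_i`) this pencil is a
multiple of `E` (resp. `Q`), hence singular.
-/

open Matrix

theorem det_pencil_fin_two {R : Type*} [CommRing R] (P M : Matrix (Fin 2) (Fin 2) R) (t : R) :
    ((1 - t) • P - t • M).det =
      (P + M).det * t ^ 2 - ((P + M).det + P.det - M.det) * t + P.det := by
  simp only [det_fin_two, Matrix.sub_apply, Matrix.add_apply, Matrix.smul_apply, smul_eq_mul]
  ring

theorem pencil_eq_of_layers {R V : Type*} [CommRing R] [AddCommGroup V] [Module R V]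
    {P M X Y : V} {c d p r : R} (hP : P = (c * p) • X + (d * r) • Y)
    (hM : M = (c * (1 - p)) • X + (d * (1 - r)) • Y) (t : R) :
    (1 - t) • P - t • M = (c * (p - t)) • X + (d * (r - t)) • Y := by
  subst hP hM
  module

theorem quadratic_eq_zero_of_singular_layers {R : Type*} [CommRing R]
    {P M X Y : Matrix (Fin 2) (Fin 2) R} {c d p r : R} (hX : X.det = 0) (hY : Y.det = 0)
    (hP : P = (c * p) • X + (d * r) • Y) (hM : M = (c * (1 - p)) • X + (d * (1 - r)) • Y) :
    (P + M).det * p ^ 2 - ((P + M).det + P.det - M.det) * p + P.det = 0 ∧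
      (P + M).det * r ^ 2 - ((P + M).det + P.det - M.det) * r + P.det = 0 := by
  simp only [← det_pencil_fin_two, pencil_eq_of_layers hP hM, sub_self, mul_zero, zero_smul,
    zero_add, add_zero, det_smul, hX, hY, and_self]

theorem e_and_q_satisfy_quadratic (a0 a1 a2 a3 a4 a5 a6 a7 : ℝ)
    (v e1 e2 e3 q1 q2 q3 n : ℝ)
    (h0 : a0 = n*(v*(1-q1)*(1-q2)*(1-q3) + (1-v)*(1-e1)*(1-e2)*(1-e3)))
    (h1 : a1 = n*(v*(1-q1)*(1-q2)*q3 + (1-v)*(1-e1)*(1-e2)*e3))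
    (h2 : a2 = n*(v*(1-q1)*q2*(1-q3) + (1-v)*(1-e1)*e2*(1-e3)))
    (h3 : a3 = n*(v*(1-q1)*q2*q3 + (1-v)*(1-e1)*e2*e3))
    (h4 : a4 = n*(v*q1*(1-q2)*(1-q3) + (1-v)*e1*(1-e2)*(1-e3)))
    (h5 : a5 = n*(v*q1*(1-q2)*q3 + (1-v)*e1*(1-e2)*e3))
    (h6 : a6 = n*(v*q1*q2*(1-q3) + (1-v)*e1*e2*(1-e3)))
    (h7 : a7 = n*(v*q1*q2*q3 + (1-v)*e1*e2*e3)) :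
    (((a0+a4)*(a7+a3) - (a1+a5)*(a6+a2)) * e1^2 - (((a0+a4)*(a7+a3) - (a1+a5)*(a6+a2)) + (a4*a7 - a5*a6) - (a0*a3 - a1*a2)) * e1 + (a4*a7 - a5*a6) = 0) ∧
    (((a0+a4)*(a7+a3) - (a1+a5)*(a6+a2)) * q1^2 - (((a0+a4)*(a7+a3) - (a1+a5)*(a6+a2)) + (a4*a7 - a5*a6) - (a0*a3 - a1*a2)) * q1 + (a4*a7 - a5*a6) = 0) ∧
    (((a0+a2)*(a7+a5) - (a4+a6)*(a3+a1)) * e2^2 - (((a0+a2)*(a7+a5) - (a4+a6)*(a3+a1)) + (a2*a7 - a3*a6) - (a0*a5 - a1*a4)) * e2 + (a2*a7 - a3*a6) = 0) ∧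
    (((a0+a2)*(a7+a5) - (a4+a6)*(a3+a1)) * q2^2 - (((a0+a2)*(a7+a5) - (a4+a6)*(a3+a1)) + (a2*a7 - a3*a6) - (a0*a5 - a1*a4)) * q2 + (a2*a7 - a3*a6) = 0) ∧
    (((a0+a1)*(a7+a6) - (a2+a3)*(a5+a4)) * e3^2 - (((a0+a1)*(a7+a6) - (a2+a3)*(a5+a4)) + (a1*a7 - a3*a5) - (a0*a6 - a2*a4)) * e3 + (a1*a7 - a3*a5) = 0) ∧
    (((a0+a1)*(a7+a6) - (a2+a3)*(a5+a4)) * q3^2 - (((a0+a1)*(a7+a6) - (a2+a3)*(a5+a4)) + (a1*a7 - a3*a5) - (a0*a6 - a2*a4)) * q3 + (a1*a7 - a3*a5) = 0) := by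
  -- `a_k` sits at the binary digits `s₁ s₂ s₃` of `k`, with `+` read as `1`.
  have ⟨hq1, he1⟩ := quadratic_eq_zero_of_singular_layers (c := n * v) (d := n * (1 - v))
      (p := q1) (r := e1) (P := !![a4, a5; a6, a7]) (M := !![a0, a1; a2, a3])
      (det_vecMulVec ![1 - q2, q2] ![1 - q3, q3]) (det_vecMulVec ![1 - e2, e2] ![1 - e3, e3])
      (by ext i j; fin_cases i <;> fin_cases j <;> simp [h4, h5, h6, h7] <;> ring)
      (by ext i j; fin_cases i <;> fin_cases j <;> simp [h0, h1, h2, h3] <;> ring)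
  have ⟨hq2, he2⟩ := quadratic_eq_zero_of_singular_layers (c := n * v) (d := n * (1 - v))
      (p := q2) (r := e2) (P := !![a2, a3; a6, a7]) (M := !![a0, a1; a4, a5])
      (det_vecMulVec ![1 - q1, q1] ![1 - q3, q3]) (det_vecMulVec ![1 - e1, e1] ![1 - e3, e3])
      (by ext i j; fin_cases i <;> fin_cases j <;> simp [h2, h3, h6, h7] <;> ring)
      (by ext i j; fin_cases i <;> fin_cases j <;> simp [h0, h1, h4, h5] <;> ring)
  have ⟨hq3, he3⟩ := quadratic_eq_zero_of_singular_layers (c := n * v) (d := n * (1 - v))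
      (p := q3) (r := e3) (P := !![a1, a3; a5, a7]) (M := !![a0, a2; a4, a6])
      (det_vecMulVec ![1 - q1, q1] ![1 - q2, q2]) (det_vecMulVec ![1 - e1, e1] ![1 - e2, e2])
      (by ext i j; fin_cases i <;> fin_cases j <;> simp [h1, h3, h5, h7] <;> ring)
      (by ext i j; fin_cases i <;> fin_cases j <;> simp [h0, h2, h4, h6] <;> ring)
  simp only [det_fin_two, Matrix.add_apply, of_apply, cons_val', cons_val_zero, cons_val_one,
    empty_val', cons_val_fin_one] at *
  exact ⟨by linear_combination he1, by linear_combination hq1, by linear_combination he2,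
    by linear_combination hq2, by linear_combination he3, by linear_combination hq3⟩
end

section
/- In ℚ[a0,...,a7], the identity 2·f21·(a4 + a5 + a6 + a7) = f1·(f21 + g21) + f3 holds, where f1 = Σa_k, f21 = (a0+a4)(a7+a3)−(a1+a5)(a6+a2), g21 = −a0a3+a1a2+a4a7−a5a6, and f3 is the cubic polynomial from the v-quadratic discriminant. -/
theorem sign_selection_identity :
    2 * ((a0+a4)*(a7+a3) - (a1+a5)*(a6+a2)) * (a4 + a5 + a6 + a7) = (a0+a1+a2+a3+a4+a5+a6+a7) * (((a0+a4)*(a7+a3) - (a1+a5)*(a6+a2)) + (-(a0*a3) + a1*a2 + a4*a7 - a5*a6)) + (((a0+a3+a5+a6) - (a7+a4+a2+a1))*(a0*a7+a3*a4+a5*a2+a6*a1) - 2*(a0*a7*(a0-a7)+a3*a4*(a3-a4)+a5*a2*(a5-a2)+a6*a1*(a6-a1)) + 2*((a3*a5*a6+a0*a5*a6+a0*a3*a6+a0*a3*a5) - (a4*a2*a1+a7*a2*a1+a7*a4*a1+a7*a4*a2))) := by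
  unfold a0 a1 a2 a3 a4 a5 a6 a7
  ring
end

section
/- In ℚ[a0,...,a7], the constant coefficient c0 of the quadratic satisfied by v in the MMR elimination factors as c0 = f21·f22·f23, i.e., the product (det A_Σ(1))·(det A_Σ(2))·(det A_Σ(3)) equals the resultant-derived sextic c0 defined by c0 = (c1 − f3²)/4 with c1 = f1²·f4. -/
/-- A `2 × 2 × 2` array; `A i j k` is the paper's `a_(4i+2j+k)`. -/
abbrev Cube (R : Type*) := Fin 2 → Fin 2 → Fin 2 → R

namespace Cube

open Matrix

variable {R : Type*} [CommRing R]

def total (A : Cube R) : R :=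
  ∑ i, ∑ j, ∑ k, A i j k

def hyperdet (A : Cube R) : R :=
  (A 0 0 0 ^ 2 * A 1 1 1 ^ 2 + A 0 1 1 ^ 2 * A 1 0 0 ^ 2 + A 1 0 1 ^ 2 * A 0 1 0 ^ 2
      + A 1 1 0 ^ 2 * A 0 0 1 ^ 2)
    + 4 * (A 0 0 0 * A 0 1 1 * A 1 0 1 * A 1 1 0 + A 1 1 1 * A 1 0 0 * A 0 1 0 * A 0 0 1)
    - 2 * (A 0 0 0 * A 1 1 1 * A 0 1 1 * A 1 0 0 + A 0 0 0 * A 1 1 1 * A 1 0 1 * A 0 1 0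
      + A 0 0 0 * A 1 1 1 * A 1 1 0 * A 0 0 1 + A 0 1 1 * A 1 0 0 * A 1 0 1 * A 0 1 0
      + A 0 1 1 * A 1 0 0 * A 1 1 0 * A 0 0 1 + A 1 0 1 * A 0 1 0 * A 1 1 0 * A 0 0 1)

/-- The paper's cubic `f3`. It is written in terms of the even-parity entries
`A 0 0 0, A 0 1 1, A 1 0 1, A 1 1 0`, each paired with its antipode among the odd-parity ones. -/
def cubicForm (A : Cube R) : R :=
  ((A 0 0 0 + A 0 1 1 + A 1 0 1 + A 1 1 0) - (A 1 1 1 + A 1 0 0 + A 0 1 0 + A 0 0 1))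
      * (A 0 0 0 * A 1 1 1 + A 0 1 1 * A 1 0 0 + A 1 0 1 * A 0 1 0 + A 1 1 0 * A 0 0 1)
    - 2 * (A 0 0 0 * A 1 1 1 * (A 0 0 0 - A 1 1 1) + A 0 1 1 * A 1 0 0 * (A 0 1 1 - A 1 0 0)
      + A 1 0 1 * A 0 1 0 * (A 1 0 1 - A 0 1 0) + A 1 1 0 * A 0 0 1 * (A 1 1 0 - A 0 0 1))
    + 2 * ((A 0 1 1 * A 1 0 1 * A 1 1 0 + A 0 0 0 * A 1 0 1 * A 1 1 0
        + A 0 0 0 * A 0 1 1 * A 1 1 0 + A 0 0 0 * A 0 1 1 * A 1 0 1)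
      - (A 1 0 0 * A 0 1 0 * A 0 0 1 + A 1 1 1 * A 0 1 0 * A 0 0 1
        + A 1 1 1 * A 1 0 0 * A 0 0 1 + A 1 1 1 * A 1 0 0 * A 0 1 0))

def sumAlong₁ (A : Cube R) : Matrix (Fin 2) (Fin 2) R :=
  of fun j k => A 0 j k + A 1 j k

def sumAlong₂ (A : Cube R) : Matrix (Fin 2) (Fin 2) R :=
  of fun i k => A i 0 k + A i 1 k

def sumAlong₃ (A : Cube R) : Matrix (Fin 2) (Fin 2) R :=
  of fun i j => A i j 0 + A i j 1

theorem total_sq_mul_hyperdet_sub_cubicForm_sq (A : Cube R) :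
    A.total ^ 2 * A.hyperdet - A.cubicForm ^ 2 =
      4 * (A.sumAlong₁.det * A.sumAlong₂.det * A.sumAlong₃.det) := by
  simp only [total, hyperdet, cubicForm, sumAlong₁, sumAlong₂, sumAlong₃, det_fin_two,
    Fin.sum_univ_two, of_apply]
  ring

end Cube

theorem c0_factorization :
    (a0+a1+a2+a3+a4+a5+a6+a7)^2 * ((a0^2*a7^2 + a3^2*a4^2 + a5^2*a2^2 + a6^2*a1^2) + 4*(a0*a3*a5*a6 + a7*a4*a2*a1) - 2*(a0*a7*a3*a4 + a0*a7*a5*a2 + a0*a7*a6*a1 + a3*a4*a5*a2 + a3*a4*a6*a1 + a5*a2*a6*a1)) - (((a0+a3+a5+a6) - (a7+a4+a2+a1))*(a0*a7+a3*a4+a5*a2+a6*a1) - 2*(a0*a7*(a0-a7)+a3*a4*(a3-a4)+a5*a2*(a5-a2)+a6*a1*(a6-a1)) + 2*((a3*a5*a6+a0*a5*a6+a0*a3*a6+a0*a3*a5) - (a4*a2*a1+a7*a2*a1+a7*a4*a1+a7*a4*a2)))^2 = 4 * (((a0+a4)*(a7+a3) - (a1+a5)*(a6+a2)) * ((a0+a2)*(a7+a5)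 - (a4+a6)*(a3+a1)) * ((a0+a1)*(a7+a6) - (a2+a3)*(a5+a4))) := by
  have key := Cube.total_sq_mul_hyperdet_sub_cubicForm_sq
    ![![![a0, a1], ![a2, a3]], ![![a4, a5], ![a6, a7]]]
  simp only [Cube.total, Cube.hyperdet, Cube.cubicForm, Cube.sumAlong₁, Cube.sumAlong₂,
    Cube.sumAlong₃, Matrix.det_fin_two, Fin.sum_univ_two, Matrix.of_apply,
    Matrix.cons_val_zero, Matrix.cons_val_one] at key
  linear_combination key
end

section
/- Let a0,...,a7 be real numbers with f1 ≠ 0, f4 > 0, f2i ≠ 0 (i=1,2,3), and suppose (v, e, q, n) is a real solution of the MMR system with n = f1. Then e_i ≠ q_i for every i ∈ {1,2,3}, provided f22·f23 ≠ 0, f21·f23 ≠ 0, and f21·f22 ≠ 0 respectively. -/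
/-!
If `e i = q i`, both latent classes give the `i`-th observed coordinate the same law, so the
mixture makes it independent of the other two coordinates. Summing the `2 × 2 × 2` table over a
third coordinate then leaves, for `i` and any other coordinate `j`, a `2 × 2` table of rank one,
and its determinant — one of the `f2j` — vanishes.
-/

theorem two_by_two_det_eq_zero_of_rank_one {R : Type*} [CommRing R] {b₀₀ b₀₁ b₁₀ b₁₁ : R}
    (r₀ r₁ c₀ c₁ : R) (h₀₀ : b₀₀ = r₀ * c₀) (h₀₁ : b₀₁ = r₀ * c₁) (h₁₀ : b₁₀ = r₁ * c₀)
    (h₁₁ : b₁₁ = r₁ * c₁) :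
    b₀₀ * b₁₁ - b₁₀ * b₀₁ = 0 := by
  subst h₀₀ h₀₁ h₁₀ h₁₁
  ring

theorem e_ne_q_general (a0 a1 a2 a3 a4 a5 a6 a7 : ℝ)
    (v e1 e2 e3 q1 q2 q3 : ℝ)
    (h0 : a0 = (a0+a1+a2+a3+a4+a5+a6+a7)*(v*(1-q1)*(1-q2)*(1-q3) + (1-v)*(1-e1)*(1-e2)*(1-e3)))
    (h1 : a1 = (a0+a1+a2+a3+a4+a5+a6+a7)*(v*(1-q1)*(1-q2)*q3 + (1-v)*(1-e1)*(1-e2)*e3))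
    (h2 : a2 = (a0+a1+a2+a3+a4+a5+a6+a7)*(v*(1-q1)*q2*(1-q3) + (1-v)*(1-e1)*e2*(1-e3)))
    (h3 : a3 = (a0+a1+a2+a3+a4+a5+a6+a7)*(v*(1-q1)*q2*q3 + (1-v)*(1-e1)*e2*e3))
    (h4 : a4 = (a0+a1+a2+a3+a4+a5+a6+a7)*(v*q1*(1-q2)*(1-q3) + (1-v)*e1*(1-e2)*(1-e3)))
    (h5 : a5 = (a0+a1+a2+a3+a4+a5+a6+a7)*(v*q1*(1-q2)*q3 + (1-v)*e1*(1-e2)*e3))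
    (h6 : a6 = (a0+a1+a2+a3+a4+a5+a6+a7)*(v*q1*q2*(1-q3) + (1-v)*e1*e2*(1-e3)))
    (h7 : a7 = (a0+a1+a2+a3+a4+a5+a6+a7)*(v*q1*q2*q3 + (1-v)*e1*e2*e3)) :
    (((a0+a2)*(a7+a5) - (a4+a6)*(a3+a1)) * ((a0+a1)*(a7+a6) - (a2+a3)*(a5+a4)) ≠ 0 → e1 ≠ q1) ∧
    (((a0+a4)*(a7+a3) - (a1+a5)*(a6+a2)) * ((a0+a1)*(a7+a6) - (a2+a3)*(a5+a4)) ≠ 0 → e2 ≠ q2) ∧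
    (((a0+a4)*(a7+a3) - (a1+a5)*(a6+a2)) * ((a0+a2)*(a7+a5) - (a4+a6)*(a3+a1)) ≠ 0 → e3 ≠ q3) := by
  generalize a0+a1+a2+a3+a4+a5+a6+a7 = n at h0 h1 h2 h3 h4 h5 h6 h7
  refine ⟨?_, ?_, ?_⟩
  · rintro hne rfl
    have hdet : (a0+a2)*(a7+a5) - (a4+a6)*(a1+a3) = 0 :=
      two_by_two_det_eq_zero_of_rank_one (n*(1-e1)) (n*e1) (v*(1-q3)+(1-v)*(1-e3)) (v*q3+(1-v)*e3)
      (by linear_combination h0 + h2) (by linear_combination h1 + h3)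
      (by linear_combination h4 + h6) (by linear_combination h5 + h7)
    exact hne (by linear_combination ((a0+a1)*(a7+a6) - (a2+a3)*(a5+a4)) * hdet)
  · rintro hne rfl
    have hdet : (a0+a4)*(a7+a3) - (a2+a6)*(a1+a5) = 0 :=
      two_by_two_det_eq_zero_of_rank_one (n*(1-e2)) (n*e2) (v*(1-q3)+(1-v)*(1-e3)) (v*q3+(1-v)*e3)
      (by linear_combination h0 + h4) (by linear_combination h1 + h5)
      (by linear_combination h2 + h6) (by linear_combination h3 + h7)
    exact hne (by linear_combination ((a0+a1)*(a7+a6) - (a2+a3)*(a5+a4)) * hdet)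
  · rintro hne rfl
    have hdet : (a0+a2)*(a7+a5) - (a1+a3)*(a4+a6) = 0 :=
      two_by_two_det_eq_zero_of_rank_one (n*(1-e3)) (n*e3) (v*(1-q1)+(1-v)*(1-e1)) (v*q1+(1-v)*e1)
      (by linear_combination h0 + h2) (by linear_combination h4 + h6)
      (by linear_combination h1 + h3) (by linear_combination h5 + h7)
    exact hne (by linear_combination ((a0+a4)*(a7+a3) - (a1+a5)*(a6+a2)) * hdet)

theorem e_ne_q (a0 a1 a2 a3 a4 a5 a6 a7 : ℝ)
    (hf1 : (a0+a1+a2+a3+a4+a5+a6+a7) ≠ 0)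
    (hf4 : 0 < ((a0^2*a7^2 + a3^2*a4^2 + a5^2*a2^2 + a6^2*a1^2) + 4*(a0*a3*a5*a6 + a7*a4*a2*a1) - 2*(a0*a7*a3*a4 + a0*a7*a5*a2 + a0*a7*a6*a1 + a3*a4*a5*a2 + a3*a4*a6*a1 + a5*a2*a6*a1)))
    (h21 : ((a0+a4)*(a7+a3) - (a1+a5)*(a6+a2)) ≠ 0) (h22 : ((a0+a2)*(a7+a5) - (a4+a6)*(a3+a1)) ≠ 0) (h23 : ((a0+a1)*(a7+a6) - (a2+a3)*(a5+a4)) ≠ 0)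
    (v e1 e2 e3 q1 q2 q3 : ℝ)
    (h0 : a0 = (a0+a1+a2+a3+a4+a5+a6+a7)*(v*(1-q1)*(1-q2)*(1-q3) + (1-v)*(1-e1)*(1-e2)*(1-e3)))
    (h1 : a1 = (a0+a1+a2+a3+a4+a5+a6+a7)*(v*(1-q1)*(1-q2)*q3 + (1-v)*(1-e1)*(1-e2)*e3))
    (h2 : a2 = (a0+a1+a2+a3+a4+a5+a6+a7)*(v*(1-q1)*q2*(1-q3) + (1-v)*(1-e1)*e2*(1-e3)))
    (h3 : a3 = (a0+a1+a2+a3+a4+a5+a6+a7)*(v*(1-q1)*q2*q3 + (1-v)*(1-e1)*e2*e3))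
    (h4 : a4 = (a0+a1+a2+a3+a4+a5+a6+a7)*(v*q1*(1-q2)*(1-q3) + (1-v)*e1*(1-e2)*(1-e3)))
    (h5 : a5 = (a0+a1+a2+a3+a4+a5+a6+a7)*(v*q1*(1-q2)*q3 + (1-v)*e1*(1-e2)*e3))
    (h6 : a6 = (a0+a1+a2+a3+a4+a5+a6+a7)*(v*q1*q2*(1-q3) + (1-v)*e1*e2*(1-e3)))
    (h7 : a7 = (a0+a1+a2+a3+a4+a5+a6+a7)*(v*q1*q2*q3 + (1-v)*e1*e2*e3)) :
    (((a0+a2)*(a7+a5) - (a4+a6)*(a3+a1)) * ((a0+a1)*(a7+a6) - (a2+a3)*(a5+a4)) ≠ 0 → e1 ≠ q1) ∧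
    (((a0+a4)*(a7+a3) - (a1+a5)*(a6+a2)) * ((a0+a1)*(a7+a6) - (a2+a3)*(a5+a4)) ≠ 0 → e2 ≠ q2) ∧
    (((a0+a4)*(a7+a3) - (a1+a5)*(a6+a2)) * ((a0+a2)*(a7+a5) - (a4+a6)*(a3+a1)) ≠ 0 → e3 ≠ q3) :=
  e_ne_q_general a0 a1 a2 a3 a4 a5 a6 a7 v e1 e2 e3 q1 q2 q3 h0 h1 h2 h3 h4 h5 h6 h7
end
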